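/- arXiv:2411.08416 — 5 statements merged into one kernel-verified Lean document; each statement's English description precedes it below -/
import Mathlib

section
/- Let G be a first countable locally compact Hausdorff topological group and let γ : ℝ → G be a continuous group homomorphism. If the closure of γ(ℝ) is not compact and γ is a homeomorphism onto its image, then γ(ℝ) is a closed subset of G. -/
/-- a one-parameter subgroup of a first countable locally compact
Hausdorff group whose image has non-compact closure and which is a homeomorphism
onto its image has closed image. -/
theorem stmt7 {G : Type*} [Group G] [TopologicalSpace G] [IsTopologicalGroup G]
    [FirstCountableTopology G] [LocallyCompactSpace G] [T2Space G]
    (γ : ℝ → G) (hγc : Continuous γ)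
    (hhom : ∀ s t : ℝ, γ (s + t) = γ s * γ t)
    (hnc : ¬ IsCompact (closure (Set.range γ)))
    (hemb : Topology.IsEmbedding γ) :
    IsClosed (Set.range γ) := by
  -- γ 0 = 1
  have h0 : γ 0 = 1 := by
    have := hhom 0 0
    rw [add_zero] at this
    exact (left_eq_mul.mp this)
  -- the range is a subgroup
  have hinv : ∀ t : ℝ, (γ t)⁻¹ = γ (-t) := by
    intro t
    have : γ t * γ (-t) = 1 := by rw [← hhom, add_neg_cancel, h0]
    exact inv_eq_of_mul_eq_one_right this
  set S : Subgroup G :=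
    { carrier := Set.range γ
      mul_mem' := by
        rintro _ _ ⟨s, rfl⟩ ⟨t, rfl⟩
        exact ⟨s + t, hhom s t⟩
      one_mem' := ⟨0, h0⟩
      inv_mem' := by
        rintro _ ⟨t, rfl⟩
        exact ⟨-t, (hinv t).symm⟩ } with hS
  -- a compact neighborhood of 1 within the range
  set K : Set G := γ '' Set.Icc (-1) 1 with hK
  have hKcomp : IsCompact K := (isCompact_Icc).image hemb.continuous
  have hKS : K ⊆ Set.range γ := Set.image_subset_range _ _
  -- an open set V of G with 1 ∈ V and V ∩ range γ ⊆ K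
  obtain ⟨V, hVopen, hVpre⟩ :=
    hemb.isInducing.isOpen_iff.mp (isOpen_Ioo (a := (-1 : ℝ)) (b := 1))
  have h1V : (1 : G) ∈ V := by
    rw [← h0]
    have : (0 : ℝ) ∈ γ ⁻¹' V := by rw [hVpre]; exact ⟨by norm_num, by norm_num⟩
    exact this
  have hVK : V ∩ Set.range γ ⊆ K := by
    rintro x ⟨hxV, t, rfl⟩
    have ht : t ∈ Set.Ioo (-1 : ℝ) 1 := by rw [← hVpre]; exact hxV
    exact ⟨t, ⟨le_of_lt ht.1, le_of_lt ht.2⟩, rfl⟩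
  -- V ∩ closure (range γ) ⊆ range γ
  have hkey : V ∩ closure (Set.range γ) ⊆ Set.range γ := by
    intro x hx
    have h1 : x ∈ closure (V ∩ Set.range γ) := hVopen.inter_closure ⟨hx.1, hx.2⟩
    have h2 : closure (V ∩ Set.range γ) ⊆ K :=
      closure_minimal hVK (hKcomp.isClosed)
    exact hKS (h2 h1)
  -- now show closure (range γ) ⊆ range γ
  have hsub : closure (Set.range γ) ⊆ Set.range γ := by
    intro h hh
    -- h ∈ closure of range; find s ∈ range with s⁻¹ * h ∈ V
    have hUopen : IsOpen {g : G | g⁻¹ * h ∈ V} :=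
      hVopen.preimage (by continuity)
    have hhU : h ∈ {g : G | g⁻¹ * h ∈ V} := by simp [h1V]
    obtain ⟨s, hsU, hsS⟩ :=
      mem_closure_iff.mp hh _ hUopen hhU
    -- s⁻¹ * h is in closure of range (a subgroup)
    have hHsub : s⁻¹ * h ∈ closure (Set.range γ) := by
      have hs' : s ∈ S.topologicalClosure := subset_closure hsS
      have hh' : h ∈ S.topologicalClosure := hh
      exact mul_mem (inv_mem hs') hh'
    have : s⁻¹ * h ∈ Set.range γ := hkey ⟨hsU, hHsub⟩
    obtain ⟨t1, ht1⟩ := hsS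
    obtain ⟨t2, ht2⟩ := this
    refine ⟨t1 + t2, ?_⟩
    rw [hhom, ht1, ht2, ← mul_assoc, mul_inv_cancel, one_mul]
  exact isClosed_of_closure_subset hsub
end

section
/- Let H ≤ GL(d, ℝ) be a closed subgroup with left Haar measure μ_H, integrably admissible with essential frequency support 𝒪. Let K ⊆ 𝒪 be compact and let f : 𝒪 → [0,∞) be continuous with compact support contained in 𝒪. Then the function M_{K,H} f : H → [0,∞), h ↦ sup_{ξ ∈ K} f(hᵀ ξ), is Borel measurable and ∫_H M_{K,H} f(h) dμ_H(h) < ∞. -/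
open Matrix MeasureTheory

/-- The dual action ξ ↦ hᵀ ξ of an invertible matrix on ℝ^d. -/
noncomputable def dualAct {d : ℕ} (h : GL (Fin d) ℝ) (ξ : Fin d → ℝ) : Fin d → ℝ :=
  ((h : Matrix (Fin d) (Fin d) ℝ)ᵀ).mulVec ξ

/-- `O` is an essential frequency support for the dilation group `H ≤ GL(d, ℝ)`:
(a1) `O` is open with Lebesgue-null complement; (a2) `O = Hᵀ C` for some compact
`C ⊆ O`; (a3) for each compact `K ⊆ O` the set `[K]` is compact. -/
def essFreqSupp {d : ℕ} (H : Subgroup (GL (Fin d) ℝ)) (O : Set (Fin d → ℝ)) : Prop :=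
  IsOpen O ∧ volume Oᶜ = 0 ∧
  (∃ C : Set (Fin d → ℝ), IsCompact C ∧ C ⊆ O ∧ O = ⋃ h ∈ H, dualAct h '' C) ∧
  ∀ K : Set (Fin d → ℝ), IsCompact K → K ⊆ O →
    IsCompact {p : GL (Fin d) ℝ × (Fin d → ℝ) |
      p.1 ∈ H ∧ p.2 ∈ O ∧ dualAct p.1 p.2 ∈ K ∧ p.2 ∈ K}

set_option synthInstance.maxHeartbeats 800000 in
/-- for an integrably admissible group H with frequency support 𝒪,
a compact K ⊆ 𝒪 and nonnegative f ∈ C_c(𝒪), the function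
M_{K,H} f : h ↦ sup_{ξ ∈ K} f(hᵀξ) is measurable and μ_H-integrable. -/
theorem stmt12 {d : ℕ} (H : Subgroup (GL (Fin d) ℝ))
    (hHcl : IsClosed (H : Set (GL (Fin d) ℝ)))
    (O : Set (Fin d → ℝ)) (hO : essFreqSupp H O)
    [MeasurableSpace ↥H] [BorelSpace ↥H]
    (μ : Measure ↥H) [μ.IsHaarMeasure]
    (K : Set (Fin d → ℝ)) (hK : IsCompact K) (hKO : K ⊆ O)
    (f : (Fin d → ℝ) → ℝ) (hf : Continuous f) (hf0 : ∀ ξ, 0 ≤ f ξ)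
    (hfsupp : HasCompactSupport f) (hfO : tsupport f ⊆ O) :
    Measurable (fun h : ↥H => sSup ((fun ξ => f (dualAct (↑h) ξ)) '' K)) ∧
    ∫⁻ h, ENNReal.ofReal (sSup ((fun ξ => f (dualAct (↑h) ξ)) '' K)) ∂μ < ⊤ := by
  -- a uniform bound for f
  obtain ⟨B, hB⟩ := hfsupp.exists_bound_of_continuous hf
  have hB' : ∀ ξ, f ξ ≤ B := fun ξ => (le_abs_self _).trans (by simpa using hB ξ)
  have hB0 : 0 ≤ B := le_trans (hf0 0) (hB' 0)
  set g : ↥H → ℝ := fun h => sSup ((fun ξ => f (dualAct (↑h) ξ)) '' K) with hg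
  -- pointwise bounds on g
  have hgB : ∀ h, g h ≤ B := by
    intro h
    apply Real.sSup_le _ hB0
    rintro x ⟨ξ, -, rfl⟩
    exact hB' _
  have hg0 : ∀ h, 0 ≤ g h := fun h =>
    Real.sSup_nonneg (by rintro x ⟨ξ, -, rfl⟩; exact hf0 _)
  -- continuity of the family
  have hcont : ∀ ξ : Fin d → ℝ, Continuous fun h : ↥H => f (dualAct (↑h) ξ) := by
    intro ξ
    apply hf.comp
    have h1 : Continuous fun h : ↥H => ((h : GL (Fin d) ℝ) : Matrix (Fin d) (Fin d) ℝ) :=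
      Units.continuous_val.comp continuous_subtype_val
    exact (h1.matrix_transpose.matrix_mulVec continuous_const)
  -- measurability via lower semicontinuity of the supremum
  have hmeas : Measurable g := by
    rcases K.eq_empty_or_nonempty with rfl | hKne
    · simp [hg, Real.sSup_empty]
    · have hrepr : g = fun h : ↥H => ⨆ ξ : K, f (dualAct (↑h) ξ) := by
        funext h
        simp only [hg, iSup, Set.image_eq_range]
      rw [hrepr]
      have bdd : ∀ h : ↥H, BddAbove (Set.range fun ξ : K => f (dualAct (↑h) ξ)) := by
        intro h
        exact ⟨B, by rintro x ⟨ξ, rfl⟩; exact hB' _⟩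
      exact (lowerSemicontinuous_ciSup bdd fun ξ : K =>
        (hcont ξ).lowerSemicontinuous).measurable
  refine ⟨hmeas, ?_⟩
  -- the enlarged compact set K' and the compact "support" of g
  set K' : Set (Fin d → ℝ) := K ∪ tsupport f with hK'
  have hK'cpt : IsCompact K' := hK.union hfsupp
  have hK'O : K' ⊆ O := Set.union_subset hKO hfO
  obtain ⟨-, -, -, h3⟩ := hO
  have hPcpt := h3 K' hK'cpt hK'O
  set P : Set (GL (Fin d) ℝ) :=
    Prod.fst '' {p : GL (Fin d) ℝ × (Fin d → ℝ) |
      p.1 ∈ H ∧ p.2 ∈ O ∧ dualAct p.1 p.2 ∈ K' ∧ p.2 ∈ K'} with hP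
  have hPcpt' : IsCompact P := hPcpt.image continuous_fst
  set P' : Set ↥H := Subtype.val ⁻¹' P with hP'
  have hP'cpt : IsCompact P' :=
    hHcl.isClosedEmbedding_subtypeVal.isCompact_preimage hPcpt'
  -- outside P', g vanishes
  have hvanish : ∀ h : ↥H, h ∉ P' → g h = 0 := by
    intro h hh
    have hzero : ∀ ξ ∈ K, f (dualAct (↑h) ξ) = 0 := by
      intro ξ hξ
      by_contra hne
      have hmem : dualAct (↑h : GL (Fin d) ℝ) ξ ∈ tsupport f :=
        subset_tsupport f (by simpa [Function.mem_support] using hne)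
      exact hh ⟨((h : GL (Fin d) ℝ), ξ),
        ⟨h.2, hKO hξ, Or.inr hmem, Or.inl hξ⟩, rfl⟩
    rcases K.eq_empty_or_nonempty with rfl | hKne
    · simp [hg, Real.sSup_empty]
    · have : (fun ξ => f (dualAct (↑h) ξ)) '' K = {0} := by
        apply Set.eq_singleton_iff_nonempty_unique_mem.2
        exact ⟨hKne.image _, by rintro x ⟨ξ, hξ, rfl⟩; exact hzero ξ hξ⟩
      simp [hg, this]
  -- dominate the lintegral by an indicator of the compact set
  have hdom : ∀ h : ↥H, ENNReal.ofReal (g h) ≤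
      P'.indicator (fun _ => ENNReal.ofReal B) h := by
    intro h
    by_cases hh : h ∈ P'
    · simp only [Set.indicator_of_mem hh]; exact ENNReal.ofReal_le_ofReal (hgB h)
    · simp [Set.indicator_of_notMem hh, hvanish h hh]
  calc ∫⁻ h, ENNReal.ofReal (g h) ∂μ
      ≤ ∫⁻ h, P'.indicator (fun _ => ENNReal.ofReal B) h ∂μ := lintegral_mono hdom
    _ = ENNReal.ofReal B * μ P' := by
        rw [lintegral_indicator hP'cpt.isClosed.measurableSet]
        simp [mul_comm]
    _ < ⊤ := ENNReal.mul_lt_top ENNReal.ofReal_lt_top hP'cpt.measure_lt_top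
end

section
/- Let H ≤ GL(d, ℝ) be integrably admissible with essential frequency support 𝒪 = Hᵀ C, C ⊆ 𝒪 compact, let ξ₀ ∈ ∂𝒪, and let (ξₙ) be a sequence in 𝒪 converging to ξ₀, with ξₙ = hₙᵀ cₙ for hₙ ∈ H, cₙ ∈ C. Let Q ⊆ H be a compact neighborhood of the identity. Then for every N ∈ ℕ there exists M ∈ ℕ with h_M Q ∩ ⋃_{ℓ=1}^N h_ℓ Q = ∅; consequently some subsequence (h_{n_ℓ}) satisfies that the sets (h_{n_ℓ} Q) are pairwise disjoint. -/
open Matrix MeasureTheory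

open Pointwise

lemma continuous_dualAct {d : ℕ} :
    Continuous (fun p : GL (Fin d) ℝ × (Fin d → ℝ) => dualAct p.1 p.2) := by
  unfold dualAct
  exact ((Units.continuous_val.comp continuous_fst).matrix_transpose).matrix_mulVec
    continuous_snd

/-- for a sequence ξₙ = hₙᵀcₙ in 𝒪 converging to a boundary point ξ₀
and a compact identity neighborhood Q in H, every finite union of the translates h_ℓQ
misses some h_MQ, and consequently a subsequence of the translates is pairwise disjoint. -/
theorem stmt15 {d : ℕ} (H : Subgroup (GL (Fin d) ℝ))
    (hHcl : IsClosed (H : Set (GL (Fin d) ℝ)))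
    (O : Set (Fin d → ℝ)) (hO : essFreqSupp H O)
    (C : Set (Fin d → ℝ)) (hC : IsCompact C) (hCO : C ⊆ O)
    (hOC : O = ⋃ h ∈ H, dualAct h '' C)
    (ξ₀ : Fin d → ℝ) (hξ₀ : ξ₀ ∈ frontier O)
    (ξ : ℕ → (Fin d → ℝ)) (hξO : ∀ n, ξ n ∈ O)
    (hlim : Filter.Tendsto ξ Filter.atTop (nhds ξ₀))
    (hn : ℕ → ↥H) (c : ℕ → (Fin d → ℝ)) (hc : ∀ n, c n ∈ C)
    (hfact : ∀ n, ξ n = dualAct (↑(hn n)) (c n))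
    (Q : Set ↥H) (hQc : IsCompact Q) (hQ1 : Q ∈ nhds (1 : ↥H)) :
    (∀ N : ℕ, ∃ M : ℕ, Disjoint (((hn M * ·) '' Q)) (⋃ ℓ ∈ Finset.Icc 1 N, ((hn ℓ * ·) '' Q))) ∧
    ∃ φ : ℕ → ℕ, StrictMono φ ∧
      Pairwise (Function.onFun Disjoint (fun ℓ => ((hn (φ ℓ) * ·) '' Q))) := by
  have hξ₀O : ξ₀ ∉ O := by
    intro h
    exact hξ₀.2 (mem_interior_iff_mem_nhds.mpr (hO.1.mem_nhds h))
  -- Key finiteness lemma: hn escapes every compact subset of H.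
  have key : ∀ S : Set ↥H, IsCompact S → {n : ℕ | hn n ∈ S}.Finite := by
    intro S hS
    by_contra hinf
    have hinf : {n : ℕ | hn n ∈ S}.Infinite := hinf
    set T : Set (Fin d → ℝ) :=
      (fun p : ↥H × (Fin d → ℝ) => dualAct ↑p.1 p.2) '' (S ×ˢ C) with hT
    have hTc : IsCompact T := by
      refine (hS.prod hC).image ?_
      exact continuous_dualAct.comp
        ((continuous_subtype_val.comp continuous_fst).prodMk continuous_snd)
    have hTO : T ⊆ O := by
      rintro x ⟨⟨h, cc⟩, ⟨hhS, hccC⟩, rfl⟩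
      rw [hOC]
      exact Set.mem_biUnion h.2 ⟨cc, hccC, rfl⟩
    have hfreq : ∃ᶠ n in Filter.atTop, ξ n ∈ T := by
      rw [Filter.frequently_atTop]
      intro a
      obtain ⟨n, hnS, hna⟩ := hinf.exists_gt a
      exact ⟨n, le_of_lt hna, by
        rw [hfact n]; exact ⟨(hn n, c n), ⟨hnS, hc n⟩, rfl⟩⟩
    have : ξ₀ ∈ closure T := mem_closure_of_frequently_of_tendsto hfreq hlim
    rw [hTc.isClosed.closure_eq] at this
    exact hξ₀O (hTO this)
  -- If two translates meet, hn m lies in a translate of Q * Q⁻¹.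
  have hmeet : ∀ m ℓ : ℕ, ¬ Disjoint ((hn m * ·) '' Q) ((hn ℓ * ·) '' Q) →
      hn m ∈ (hn ℓ * ·) '' (Q * Q⁻¹) := by
    intro m ℓ hnd
    obtain ⟨x, hx1, hx2⟩ := Set.not_disjoint_iff.mp hnd
    obtain ⟨a, haQ, ha⟩ := hx1
    obtain ⟨b, hbQ, hb⟩ := hx2
    refine ⟨b * a⁻¹, Set.mul_mem_mul hbQ (Set.inv_mem_inv.mpr haQ), ?_⟩
    have : hn m * a = hn ℓ * b := ha.trans hb.symm
    calc hn ℓ * (b * a⁻¹) = hn ℓ * b * a⁻¹ := by rw [mul_assoc]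
      _ = hn m * a * a⁻¹ := by rw [this]
      _ = hn m := by rw [mul_assoc, mul_inv_cancel, mul_one]
  have hQQc : IsCompact (Q * Q⁻¹) := hQc.mul hQc.inv
  -- Main step: avoiding any finite family of translates, with a lower bound.
  have main : ∀ (F : Finset ℕ) (B : ℕ), ∃ M : ℕ, B ≤ M ∧
      ∀ ℓ ∈ F, Disjoint ((hn M * ·) '' Q) ((hn ℓ * ·) '' Q) := by
    intro F B
    set S : Set ↥H := ⋃ ℓ ∈ F, (hn ℓ * ·) '' (Q * Q⁻¹) with hSdef
    have hSc : IsCompact S := F.isCompact_biUnion (fun ℓ _ =>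
      hQQc.image (continuous_mul_left _))
    have hfin : {n : ℕ | hn n ∈ S}.Finite := key S hSc
    have : ∃ M : ℕ, B ≤ M ∧ hn M ∉ S := by
      obtain ⟨M, hM⟩ := (hfin.union (Set.finite_Iio B)).infinite_compl.nonempty
      simp only [Set.mem_compl_iff, Set.mem_union, Set.mem_setOf_eq, Set.mem_Iio,
        not_or, not_lt] at hM
      exact ⟨M, hM.2, hM.1⟩
    obtain ⟨M, hMB, hMS⟩ := this
    refine ⟨M, hMB, fun ℓ hℓ => ?_⟩
    by_contra hnd
    exact hMS (Set.mem_biUnion hℓ (hmeet M ℓ hnd))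
  constructor
  · intro N
    obtain ⟨M, _, hM⟩ := main (Finset.Icc 1 N) 0
    exact ⟨M, Set.disjoint_iUnion₂_right.mpr fun ℓ hℓ => hM ℓ hℓ⟩
  · -- construct the subsequence recursively
    set step : ℕ × Finset ℕ → ℕ × Finset ℕ := fun p =>
      (Classical.choose (main p.2 (p.1 + 1)),
        insert (Classical.choose (main p.2 (p.1 + 1))) p.2) with hstep
    set st : ℕ → ℕ × Finset ℕ := fun k => step^[k] (0, {0}) with hst
    set φ : ℕ → ℕ := fun k => (st k).1 with hφ
    have hsucc : ∀ k, st (k + 1) = step (st k) := by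
      intro k
      simp [hst, Function.iterate_succ_apply']
    have hφsucc : ∀ k, φ (k+1) = Classical.choose (main (st k).2 ((st k).1 + 1)) :=
      fun k => congrArg Prod.fst (hsucc k)
    have hFsucc : ∀ k, (st (k+1)).2
        = insert (Classical.choose (main (st k).2 ((st k).1 + 1))) (st k).2 :=
      fun k => congrArg Prod.snd (hsucc k)
    have hlt : ∀ k, φ k < φ (k + 1) := by
      intro k
      have h1 := (Classical.choose_spec (main (st k).2 ((st k).1 + 1))).1
      have h2 := hφsucc k
      have h3 : φ k = (st k).1 := rfl
      omega
    have hmono : StrictMono φ := strictMono_nat_of_lt_succ hlt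
    have hmem : ∀ k j, j ≤ k → φ j ∈ (st k).2 := by
      intro k
      induction k with
      | zero => intro j hj; interval_cases j; simp [hst, hφ]
      | succ k ih =>
        intro j hj
        rw [hFsucc k]
        rcases Nat.lt_or_ge j (k + 1) with h | h
        · exact Finset.mem_insert_of_mem (ih j (Nat.lt_succ_iff.mp h))
        · have : j = k + 1 := le_antisymm hj h
          subst this
          rw [hφsucc k]
          exact Finset.mem_insert_self _ _
    have hdisj : ∀ j k, j < k →
        Disjoint ((hn (φ k) * ·) '' Q) ((hn (φ j) * ·) '' Q) := by
      intro j k hjk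
      obtain ⟨k, rfl⟩ := Nat.exists_eq_add_of_lt hjk
      set k' := j + k with hk'
      have hspec := (Classical.choose_spec (main (st k').2 ((st k').1 + 1))).2
      rw [hφsucc k']
      exact hspec (φ j) (hmem k' j (by omega))
    refine ⟨φ, hmono, fun i j hij => ?_⟩
    rcases hij.lt_or_gt with h | h
    · exact (hdisj i j h).symm
    · exact hdisj j i h
end

section
/- Let H ≤ GL(d, ℝ) be integrably admissible with essential frequency support 𝒪. Then for each ξ ∈ 𝒪, the stabilizer subgroup H_ξ = { h ∈ H : hᵀξ = ξ } is compact. -/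
open Matrix MeasureTheory

/-- for an integrably admissible group, the stabilizer of each point of
the essential frequency support is compact. -/
theorem stmt16 {d : ℕ} (H : Subgroup (GL (Fin d) ℝ))
    (hHcl : IsClosed (H : Set (GL (Fin d) ℝ)))
    (O : Set (Fin d → ℝ)) (hO : essFreqSupp H O)
    (ξ : Fin d → ℝ) (hξ : ξ ∈ O) :
    IsCompact {h : GL (Fin d) ℝ | h ∈ H ∧ dualAct h ξ = ξ} := by
  obtain ⟨-, -, -, h3⟩ := hO
  have hK : IsCompact {p : GL (Fin d) ℝ × (Fin d → ℝ) |
      p.1 ∈ H ∧ p.2 ∈ O ∧ dualAct p.1 p.2 ∈ ({ξ} : Set (Fin d → ℝ)) ∧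
      p.2 ∈ ({ξ} : Set (Fin d → ℝ))} :=
    h3 {ξ} isCompact_singleton (Set.singleton_subset_iff.mpr hξ)
  have himg := hK.image (continuous_fst)
  convert himg using 1
  ext h
  constructor
  · rintro ⟨hH, heq⟩
    exact ⟨(h, ξ), ⟨hH, hξ, heq, rfl⟩, rfl⟩
  · rintro ⟨⟨g, η⟩, ⟨hH, -, hact, hη⟩, rfl⟩
    simp only [Set.mem_singleton_iff] at hact hη
    subst hη
    exact ⟨hH, hact⟩
end

section
/- Let H ≤ GL(d, ℝ) be integrably admissible with essential frequency support 𝒪. Then for arbitrary compact sets C₁, C₂ ⊆ 𝒪, the set ((C₁, C₂)) = { h ∈ H : hᵀ C₁ ∩ C₂ ≠ ∅ } is compact. -/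
open Matrix MeasureTheory

/-- for compact C₁, C₂ ⊆ 𝒪, the set ((C₁, C₂)) = {h ∈ H : hᵀC₁ ∩ C₂ ≠ ∅}
is compact. -/
theorem stmt17 {d : ℕ} (H : Subgroup (GL (Fin d) ℝ))
    (hHcl : IsClosed (H : Set (GL (Fin d) ℝ)))
    (O : Set (Fin d → ℝ)) (hO : essFreqSupp H O)
    (C₁ C₂ : Set (Fin d → ℝ)) (hC₁ : IsCompact C₁) (hC₂ : IsCompact C₂)
    (hC₁O : C₁ ⊆ O) (hC₂O : C₂ ⊆ O) :
    IsCompact {h : GL (Fin d) ℝ | h ∈ H ∧ ((dualAct h '' C₁) ∩ C₂).Nonempty} := by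
  obtain ⟨hOopen, hnull, hCex, hKprop⟩ := hO
  have hKcomp := hKprop (C₁ ∪ C₂) (hC₁.union hC₂) (Set.union_subset hC₁O hC₂O)
  have hcont : Continuous fun p : GL (Fin d) ℝ × (Fin d → ℝ) => dualAct p.1 p.2 := by
    unfold dualAct
    exact Continuous.matrix_mulVec
      (Continuous.matrix_transpose ((Units.continuous_val).comp continuous_fst))
      continuous_snd
  set S : Set (GL (Fin d) ℝ × (Fin d → ℝ)) :=
    {p | p.1 ∈ H ∧ p.2 ∈ C₁ ∧ dualAct p.1 p.2 ∈ C₂} with hSdef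
  have hSclosed : IsClosed S := by
    refine IsClosed.inter (hHcl.preimage continuous_fst) ?_
    exact IsClosed.inter (hC₁.isClosed.preimage continuous_snd)
      (hC₂.isClosed.preimage hcont)
  have hScomp : IsCompact S := by
    refine hKcomp.of_isClosed_subset hSclosed ?_
    rintro ⟨h, ξ⟩ ⟨hh, hξ, hdξ⟩
    exact ⟨hh, hC₁O hξ, Or.inr hdξ, Or.inl hξ⟩
  have himg : {h : GL (Fin d) ℝ | h ∈ H ∧ ((dualAct h '' C₁) ∩ C₂).Nonempty}
      = Prod.fst '' S := by
    ext h
    constructor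
    · rintro ⟨hh, y, ⟨ξ, hξ, rfl⟩, hy⟩
      exact ⟨(h, ξ), ⟨hh, hξ, hy⟩, rfl⟩
    · rintro ⟨⟨h', ξ⟩, ⟨hh, hξ, hdξ⟩, rfl⟩
      exact ⟨hh, dualAct h' ξ, ⟨ξ, hξ, rfl⟩, hdξ⟩
  rw [himg]
  exact hScomp.image continuous_fst
end
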